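/- The arc-flow formulation over the DP graph is equivalent to the Gilmore-Gomory formulation over binary patterns: the optimal integer value of the arc-flow model (minimize flow z from s to t subject to ∑_{(u,v,i)∈A} f_{uvi} ≥ b_i for each item i, f integer ≥ 0) equals the optimal value of the 0-1 CSP pattern model. -/

import Mathlib

/-!
A pattern that fits traces an s–t path through the DP graph: its vertex at level `k` sits at
the load of the chosen items among the first `k`. Summing the unit flows along these paths turns
a list of patterns into an arc flow of the same value with the same item counts. Conversely,
because every arc climbs one level, an arc flow of positive value carries positive flow along
the whole path of some fitting pattern, found by following positive arcs from the source;
removing one unit of flow along it leaves a flow of value one less. So every arc flow of value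
`z` is a sum of `z` path flows, and the two models have exactly the same feasible values.
-/

/-- Vertices of the 0-1 knapsack DP graph: `some (i, p)` with level `i ∈ {0,...,m}` and
position `p ∈ {0,...,W}`; the target `t` is `none`, the source is `some (0, 0)`. -/
abbrev DV (m W : ℕ) := Option (Fin (m + 1) × Fin (W + 1))

/-- Labeled arcs of the DP graph. Labels are `Option (Fin m)`: `none` is a loss/skip arc,
`some j` means item `j` is used. From `(i, p)` there is a skip arc to `(i+1, p)` and an arc
using item `j` (with `j + 1 = i + 1`) to `(i+1, p + w j)` when it fits; from each `(m, p)`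
there is a loss arc to the target. -/
def dArc (m W : ℕ) (w : Fin m → ℕ) : DV m W → DV m W → Option (Fin m) → Prop
  | some (i, p), some (i', p'), l =>
      (i' : ℕ) = (i : ℕ) + 1 ∧
        ((l = none ∧ (p' : ℕ) = (p : ℕ)) ∨
          (∃ j : Fin m, l = some j ∧ (j : ℕ) + 1 = (i' : ℕ) ∧ (p' : ℕ) = (p : ℕ) + w j))
  | some (i, _), none, l => (i : ℕ) = m ∧ l = none
  | none, _, _ => False

/-- Feasible values of the integer arc-flow model: minimize the flow `z` from source to
target subject to flow conservation at internal nodes and the demand constraints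
`∑_{arcs labeled j} f ≥ b j`, with `f` non-negative integer and supported on arcs. -/
def flowVals (m W : ℕ) (w b : Fin m → ℕ) : Set ℕ :=
  {z | ∃ f : DV m W → DV m W → Option (Fin m) → ℕ,
    (∀ u v l, ¬ dArc m W w u v l → f u v l = 0) ∧
    (∀ v : DV m W, v ≠ some (0, 0) → v ≠ none →
      (∑ u : DV m W, ∑ l : Option (Fin m), f u v l) =
      (∑ u : DV m W, ∑ l : Option (Fin m), f v u l)) ∧
    (∀ j : Fin m, b j ≤ ∑ u : DV m W, ∑ v : DV m W, f u v (some j)) ∧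
    z = ∑ v : DV m W, ∑ l : Option (Fin m), f (some (0, 0)) v l}

/-- Feasible values of the Gilmore-Gomory 0-1 CSP pattern model: a solution is a list of
rolls, each cut according to a binary pattern, meeting all demands. -/
def patVals (m W : ℕ) (w b : Fin m → ℕ) : Set ℕ :=
  {z | ∃ L : List (Fin m → Bool), L.length = z ∧
    (∀ a ∈ L, ∑ i, (if a i then w i else 0) ≤ W) ∧
    (∀ i, b i ≤ (L.map (fun a => if a i then 1 else 0)).sum)}

open Finset

section FlowSums

variable {V L : Type*} [Fintype V] [Fintype L]

@[simps]
def inflow (v : V) : (V → V → L → ℕ) →+ ℕ where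
  toFun f := ∑ u, ∑ l, f u v l
  map_zero' := by simp
  map_add' f g := by simp [sum_add_distrib]

@[simps]
def outflow (u : V) : (V → V → L → ℕ) →+ ℕ where
  toFun f := ∑ v, ∑ l, f u v l
  map_zero' := by simp
  map_add' f g := by simp [sum_add_distrib]

@[simps]
def labelCount (l : L) : (V → V → L → ℕ) →+ ℕ where
  toFun f := ∑ u, ∑ v, f u v l
  map_zero' := by simp
  map_add' f g := by simp [sum_add_distrib]

lemma le_inflow (f : V → V → L → ℕ) (u v : V) (l : L) : f u v l ≤ inflow v f :=
  (single_le_sum (fun _ _ => Nat.zero_le _) (mem_univ l)).trans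
    (single_le_sum (f := fun u => ∑ l, f u v l) (fun _ _ => Nat.zero_le _) (mem_univ u))

lemma le_outflow (f : V → V → L → ℕ) (u v : V) (l : L) : f u v l ≤ outflow u f :=
  (single_le_sum (fun _ _ => Nat.zero_le _) (mem_univ l)).trans
    (single_le_sum (f := fun v => ∑ l, f u v l) (fun _ _ => Nat.zero_le _) (mem_univ v))

lemma exists_ne_zero_of_outflow_ne_zero {f : V → V → L → ℕ} {u : V} (h : outflow u f ≠ 0) :
    ∃ v l, f u v l ≠ 0 := by
  obtain ⟨v, -, hv⟩ := exists_ne_zero_of_sum_ne_zero h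
  obtain ⟨l, -, hl⟩ := exists_ne_zero_of_sum_ne_zero hv
  exact ⟨v, l, hl⟩

end FlowSums

section WalkFlow

variable {V L : Type*} [DecidableEq V] [DecidableEq L]

def unitArc (u v : V) (l : L) : V → V → L → ℕ :=
  fun u' v' l' => if u' = u ∧ v' = v ∧ l' = l then 1 else 0

def walkFlow (x : ℕ → V) (l : ℕ → L) (n : ℕ) : V → V → L → ℕ :=
  ∑ i ∈ range n, unitArc (x i) (x (i + 1)) (l i)

variable (x : ℕ → V) (l : ℕ → L) (n : ℕ)

lemma walkFlow_apply (u v : V) (c : L) :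
    walkFlow x l n u v c = #{i ∈ range n | u = x i ∧ v = x (i + 1) ∧ c = l i} := by
  simp [walkFlow, unitArc]

lemma exists_of_walkFlow_ne_zero {u v : V} {c : L} (h : walkFlow x l n u v c ≠ 0) :
    ∃ i < n, u = x i ∧ v = x (i + 1) ∧ c = l i := by
  obtain ⟨i, hi⟩ := card_ne_zero.1 (walkFlow_apply x l n u v c ▸ h)
  simp only [mem_filter, mem_range] at hi
  exact ⟨i, hi⟩

lemma walkFlow_le {f : V → V → L → ℕ} (hx : Set.InjOn x (Set.Iio n))
    (hf : ∀ i < n, f (x i) (x (i + 1)) (l i) ≠ 0) : walkFlow x l n ≤ f := by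
  intro u v c
  rw [walkFlow_apply]
  obtain h | h := eq_or_ne #{i ∈ range n | u = x i ∧ v = x (i + 1) ∧ c = l i} 0
  · exact h ▸ Nat.zero_le _
  obtain ⟨i, hi⟩ := card_ne_zero.1 h
  simp only [mem_filter, mem_range] at hi
  obtain ⟨hin, rfl, rfl, rfl⟩ := hi
  have hle : #{j ∈ range n | x i = x j ∧ x (i + 1) = x (j + 1) ∧ l i = l j} ≤ 1 := by
    refine card_le_one.2 fun j hj k hk => ?_
    simp only [mem_filter, mem_range] at hj hk
    exact hx (Set.mem_Iio.2 hj.1) (Set.mem_Iio.2 hk.1) (hj.2.1.symm.trans hk.2.1)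
  exact hle.trans (Nat.one_le_iff_ne_zero.2 (hf i hin))

variable [Fintype V]

lemma labelCount_unitArc (u v : V) (l l' : L) :
    labelCount l' (unitArc u v l) = if l' = l then 1 else 0 := by
  simp [unitArc, ite_and]

lemma labelCount_walkFlow (c : L) :
    labelCount c (walkFlow x l n) = ∑ i ∈ range n, if c = l i then 1 else 0 := by
  simp only [walkFlow, map_sum, labelCount_unitArc]

variable [Fintype L]

lemma inflow_unitArc (u v v' : V) (l : L) :
    inflow v' (unitArc u v l) = if v' = v then 1 else 0 := by
  simp [unitArc, ite_and]

lemma outflow_unitArc (u u' v : V) (l : L) :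
    outflow u' (unitArc u v l) = if u' = u then 1 else 0 := by
  simp [unitArc, ite_and]

lemma inflow_walkFlow (v : V) :
    inflow v (walkFlow x l n) = ∑ i ∈ range n, if v = x (i + 1) then 1 else 0 := by
  simp only [walkFlow, map_sum, inflow_unitArc]

lemma outflow_walkFlow (v : V) :
    outflow v (walkFlow x l n) = ∑ i ∈ range n, if v = x i then 1 else 0 := by
  simp only [walkFlow, map_sum, outflow_unitArc]

lemma inflow_walkFlow_eq_outflow {v : V} (h0 : v ≠ x 0) (hn : v ≠ x n) :
    inflow v (walkFlow x l n) = outflow v (walkFlow x l n) := by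
  rw [inflow_walkFlow, outflow_walkFlow]
  calc ∑ i ∈ range n, (if v = x (i + 1) then 1 else 0)
      = ∑ i ∈ range (n + 1), if v = x i then 1 else 0 := by
        rw [sum_range_succ' _ n, if_neg h0, add_zero]
    _ = ∑ i ∈ range n, if v = x i then 1 else 0 := by
        rw [sum_range_succ, if_neg hn, add_zero]

end WalkFlow

section DPGraph

variable {m W : ℕ} {w : Fin m → ℕ}

variable (m W w) in
def arcFlows : AddSubmonoid (DV m W → DV m W → Option (Fin m) → ℕ) where
  carrier := {f | (∀ u v l, ¬ dArc m W w u v l → f u v l = 0) ∧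
    ∀ v, v ≠ some (0, 0) → v ≠ none → inflow v f = outflow v f}
  zero_mem' := ⟨fun _ _ _ _ => rfl, fun _ _ _ => by simp only [map_zero]⟩
  add_mem' {f g} hf hg := ⟨fun u v l h => by simp [hf.1 u v l h, hg.1 u v l h],
    fun v hs hn => by simp only [map_add, hf.2 v hs hn, hg.2 v hs hn]⟩

lemma mem_flowVals_iff {b : Fin m → ℕ} {z : ℕ} :
    z ∈ flowVals m W w b ↔ ∃ f ∈ arcFlows m W w,
      (∀ j, b j ≤ labelCount (some j) f) ∧ z = outflow (some (0, 0)) f :=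
  exists_congr fun _ => and_assoc.symm

lemma tsub_mem_arcFlows {f g : DV m W → DV m W → Option (Fin m) → ℕ}
    (hf : f ∈ arcFlows m W w) (hg : g ∈ arcFlows m W w) (hgf : g ≤ f) :
    f - g ∈ arcFlows m W w := by
  have hsplit (φ : (DV m W → DV m W → Option (Fin m) → ℕ) →+ ℕ) : φ f = φ (f - g) + φ g := by
    rw [← map_add, tsub_add_cancel_of_le hgf]
  refine ⟨fun u v l h => by simp [hf.1 u v l h], fun v hs hn => ?_⟩
  have := hf.2 v hs hn
  rw [hsplit (inflow v), hsplit (outflow v), hg.2 v hs hn] at this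
  exact Nat.add_right_cancel this

lemma outflow_ne_zero_of_apply_ne_zero {f : DV m W → DV m W → Option (Fin m) → ℕ}
    (hf : f ∈ arcFlows m W w) {u v : DV m W} {l : Option (Fin m)} (huv : f u v l ≠ 0)
    (hs : v ≠ some (0, 0)) (hn : v ≠ none) : outflow v f ≠ 0 :=
  hf.2 v hs hn ▸ (Nat.pos_of_ne_zero huv).trans_le (le_inflow f u v l) |>.ne'

lemma inflow_eq_zero_of_outflow_prev_eq_zero {f : DV m W → DV m W → Option (Fin m) → ℕ}
    (hf : f ∈ arcFlows m W w) {c : Fin (m + 1)} (p : Fin (W + 1))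
    (h : ∀ (i : Fin (m + 1)) q, (c : ℕ) = i + 1 → outflow (some (i, q)) f = 0) :
    inflow (some (c, p)) f = 0 := by
  refine sum_eq_zero fun u _ => sum_eq_zero fun l _ => ?_
  by_contra hne
  have harc : dArc m W w u (some (c, p)) l := by_contra fun h' => hne (hf.1 _ _ _ h')
  match u, harc with
  | some (i, q), harc => exact hne (Nat.le_zero.1 (h i q harc.1 ▸ le_outflow f _ _ l))

lemma eq_zero_of_outflow_source_eq_zero {f : DV m W → DV m W → Option (Fin m) → ℕ}
    (hf : f ∈ arcFlows m W w) (h0 : outflow (some (0, 0)) f = 0) : f = 0 := by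
  have hout (c : Fin (m + 1)) (p : Fin (W + 1)) : outflow (some (c, p)) f = 0 := by
    induction c using Fin.induction generalizing p with
    | zero =>
      by_cases hp : p = 0
      · exact hp ▸ h0
      rw [← hf.2 _ (by simpa using hp) (by simp)]
      exact inflow_eq_zero_of_outflow_prev_eq_zero hf p fun i q hi => by simp at hi
    | succ c ih =>
      rw [← hf.2 _ (by simp) (by simp)]
      exact inflow_eq_zero_of_outflow_prev_eq_zero hf p fun i q hi => by
        obtain rfl : i = c.castSucc := Fin.ext (by simp at hi ⊢; omega)
        exact ih q
  funext u v l
  match u with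
  | none => exact hf.1 _ _ _ id
  | some (c, p) => exact Nat.le_zero.1 (hout c p ▸ le_outflow f _ v l)

end DPGraph

section Load

variable {m : ℕ} (w : Fin m → ℕ) (a : Fin m → Bool)

def load (k : ℕ) : ℕ := ∑ i with i.val < k, if a i then w i else 0

lemma load_zero : load w a 0 = 0 := by simp [load]

lemma load_succ {k : ℕ} (hk : k < m) :
    load w a (k + 1) = load w a k + if a ⟨k, hk⟩ then w ⟨k, hk⟩ else 0 := by
  have : univ.filter (fun i : Fin m => i.val < k + 1) =
      insert ⟨k, hk⟩ (univ.filter fun i : Fin m => i.val < k) := by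
    ext i
    simp only [mem_filter, mem_univ, true_and, mem_insert, Fin.ext_iff]
    omega
  rw [load, this, sum_insert (by simp), add_comm, load]

lemma load_of_le {k : ℕ} (hk : m ≤ k) : load w a k = ∑ i, if a i then w i else 0 :=
  sum_congr (filter_true_of_mem fun i _ => i.isLt.trans_le hk) fun _ _ => rfl

lemma load_mono : Monotone (load w a) := fun _ _ h =>
  sum_le_sum_of_subset fun i => by simp only [mem_filter, mem_univ, true_and]; omega

lemma load_le {W : ℕ} (hfit : ∑ i, (if a i then w i else 0) ≤ W) (k : ℕ) : load w a k ≤ W :=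
  (load_mono w a (le_max_left k m)).trans ((load_of_le w a (le_max_right k m)).trans_le hfit)

lemma load_congr {a a' : Fin m → Bool} {k : ℕ} (h : ∀ i : Fin m, (i : ℕ) < k → a i = a' i) :
    load w a k = load w a' k :=
  sum_congr rfl fun i hi => by rw [h i (mem_filter.1 hi).2]

end Load

section PathFlow

variable {m W : ℕ} (w : Fin m → ℕ) (a : Fin m → Bool)

-- The clamp only matters for patterns that do not fit, whose paths are never used.
variable (W) in
def pathVertex (k : ℕ) : DV m W :=
  if hk : k ≤ m then some (⟨k, Nat.lt_succ_of_le hk⟩, Fin.clamp (load w a k) W) else none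

def pathLabel (k : ℕ) : Option (Fin m) :=
  if hk : k < m then if a ⟨k, hk⟩ then some ⟨k, hk⟩ else none else none

variable (W) in
def pathFlow : DV m W → DV m W → Option (Fin m) → ℕ :=
  walkFlow (pathVertex W w a) (pathLabel a) (m + 1)

lemma pathVertex_of_le {k : ℕ} (hk : k ≤ m) :
    pathVertex W w a k = some (⟨k, Nat.lt_succ_of_le hk⟩, Fin.clamp (load w a k) W) :=
  dif_pos hk

lemma pathVertex_eq_some {k : ℕ} {c : Fin (m + 1)} {p : Fin (W + 1)} (hc : (c : ℕ) = k)
    (hp : load w a k = p) : pathVertex W w a k = some (c, p) := by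
  rw [pathVertex_of_le w a (hc ▸ Nat.le_of_lt_succ c.isLt)]
  congr
  · exact hc.symm
  · simp [Fin.ext_iff, hp, Nat.le_of_lt_succ p.isLt]

lemma pathVertex_of_lt {k : ℕ} (hk : m < k) : pathVertex W w a k = none :=
  dif_neg hk.not_ge

lemma pathVertex_zero : pathVertex W w a 0 = some (0, 0) :=
  pathVertex_eq_some w a rfl (load_zero w a)

lemma pathVertex_ne_source {k : ℕ} (hk : k ≠ 0) : pathVertex W w a k ≠ some (0, 0) := by
  unfold pathVertex
  split_ifs <;> simp [Fin.ext_iff, hk]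

lemma pathVertex_injOn : Set.InjOn (pathVertex W w a) (Set.Iio (m + 1)) := fun i hi j hj h => by
  rw [pathVertex_of_le w a (Nat.le_of_lt_succ hi), pathVertex_of_le w a (Nat.le_of_lt_succ hj)] at h
  simpa using congrArg Fin.val (Prod.ext_iff.1 (Option.some.inj h)).1

lemma pathVertex_congr {a a' : Fin m → Bool} {k : ℕ}
    (h : ∀ i : Fin m, (i : ℕ) < k → a i = a' i) : pathVertex W w a k = pathVertex W w a' k := by
  simp only [pathVertex, load_congr w h]

lemma pathLabel_congr {a a' : Fin m → Bool} {k : ℕ}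
    (h : ∀ i : Fin m, (i : ℕ) = k → a i = a' i) : pathLabel a k = pathLabel a' k := by
  by_cases hk : k < m
  · simp [pathLabel, hk, h ⟨k, hk⟩ rfl]
  · simp [pathLabel, hk]

lemma pathLabel_of_le {k : ℕ} (hk : m ≤ k) : pathLabel a k = none :=
  dif_neg hk.not_gt

variable {a}

lemma dArc_pathVertex (hfit : ∑ i, (if a i then w i else 0) ≤ W) {k : ℕ} (hk : k ≤ m) :
    dArc m W w (pathVertex W w a k) (pathVertex W w a (k + 1)) (pathLabel a k) := by
  rcases hk.lt_or_eq with hk | rfl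
  · rw [pathVertex_of_le w a hk.le, pathVertex_of_le w a hk]
    refine ⟨rfl, ?_⟩
    simp only [Fin.coe_clamp]
    rw [min_eq_left (load_le w a hfit k), min_eq_left (load_le w a hfit (k + 1)),
      load_succ w a hk, pathLabel, dif_pos hk]
    cases a ⟨k, hk⟩ <;> simp
  · rw [pathVertex_of_le w a le_rfl, pathVertex_of_lt w a (Nat.lt_succ_self _)]
    exact ⟨rfl, pathLabel_of_le a le_rfl⟩

lemma pathFlow_mem_arcFlows (hfit : ∑ i, (if a i then w i else 0) ≤ W) :
    pathFlow W w a ∈ arcFlows m W w := by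
  refine ⟨fun u v l h => by_contra fun hne => h ?_, fun v hs hn => ?_⟩
  · obtain ⟨i, hi, rfl, rfl, rfl⟩ := exists_of_walkFlow_ne_zero _ _ _ hne
    exact dArc_pathVertex w hfit (Nat.le_of_lt_succ hi)
  · exact inflow_walkFlow_eq_outflow _ _ _ (pathVertex_zero w a ▸ hs)
      (pathVertex_of_lt w a (Nat.lt_succ_self m) ▸ hn)

end PathFlow

section PathFlowCounts

variable {m W : ℕ} (w : Fin m → ℕ)

lemma outflow_source_pathFlow (a : Fin m → Bool) :
    outflow (some (0, 0)) (pathFlow W w a) = 1 := by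
  rw [pathFlow, outflow_walkFlow, sum_range_succ',
    sum_eq_zero fun i _ => if_neg (pathVertex_ne_source w a i.succ_ne_zero).symm,
    pathVertex_zero, if_pos rfl]

lemma labelCount_pathFlow (a : Fin m → Bool) (j : Fin m) :
    labelCount (some j) (pathFlow W w a) = if a j then 1 else 0 := by
  rw [pathFlow, labelCount_walkFlow, sum_eq_single (j : ℕ)]
  · by_cases h : a j <;> simp [pathLabel, h]
  · intro i _ hij
    by_cases hi : i < m
    · by_cases h : a ⟨i, hi⟩ <;> simp [pathLabel, hi, h, Fin.ext_iff, Ne.symm hij]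
    · simp [pathLabel, hi]
  · intro h
    exact absurd (mem_range.2 (Nat.lt_succ_of_lt j.isLt)) h

lemma outflow_source_sum_pathFlow (L : List (Fin m → Bool)) :
    outflow (some (0, 0)) (L.map (pathFlow W w)).sum = L.length := by
  simp only [map_list_sum, List.map_map, Function.comp_def, outflow_source_pathFlow,
    List.map_const', List.sum_replicate, smul_eq_mul, mul_one]

lemma labelCount_sum_pathFlow (L : List (Fin m → Bool)) (j : Fin m) :
    labelCount (some j) (L.map (pathFlow W w)).sum = (L.map fun a => if a j then 1 else 0).sum := by
  simp only [map_list_sum, List.map_map, Function.comp_def, labelCount_pathFlow]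

lemma sum_pathFlow_mem_arcFlows {L : List (Fin m → Bool)}
    (hL : ∀ a ∈ L, ∑ i, (if a i then w i else 0) ≤ W) :
    (L.map (pathFlow W w)).sum ∈ arcFlows m W w :=
  AddSubmonoid.list_sum_mem _ fun _ hf => by
    obtain ⟨a, ha, rfl⟩ := List.mem_map.1 hf
    exact pathFlow_mem_arcFlows w (hL a ha)

end PathFlowCounts

section Decomposition

variable {m W : ℕ} {w : Fin m → ℕ} {f : DV m W → DV m W → Option (Fin m) → ℕ}

lemma exists_update_of_dArc {a : Fin m → Bool} {k : ℕ} (hk : k < m) (hload : load w a k ≤ W)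
    {c : Fin (m + 1)} {p : Fin (W + 1)} {l : Option (Fin m)}
    (harc : dArc m W w (pathVertex W w a k) (some (c, p)) l) :
    ∃ a' : Fin m → Bool, (∀ i : Fin m, (i : ℕ) < k → a' i = a i) ∧
      load w a' (k + 1) ≤ W ∧ pathVertex W w a' (k + 1) = some (c, p) ∧ pathLabel a' k = l := by
  rw [pathVertex_of_le w a hk.le] at harc
  obtain ⟨hc, harc⟩ := harc
  replace hc : (c : ℕ) = k + 1 := hc
  set t : Fin m := ⟨k, hk⟩
  obtain ⟨bt, hp, hl⟩ : ∃ bt : Bool,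
      load w a k + (if bt then w t else 0) = p ∧ l = if bt then some t else none := by
    rcases harc with ⟨rfl, hp⟩ | ⟨j, rfl, hj, hp⟩
    · exact ⟨false, by simp [hp, hload], rfl⟩
    · obtain rfl : j = t := Fin.ext (by simp only [t]; omega)
      exact ⟨true, by simp [hp, hload], by simp⟩
  have hpre (i : Fin m) (hi : (i : ℕ) < k) : Function.update a t bt i = a i :=
    Function.update_of_ne (Fin.ne_of_val_ne hi.ne) _ _
  have hload' : load w (Function.update a t bt) (k + 1) = p := by
    rw [load_succ w _ hk, load_congr w hpre, Function.update_self, hp]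
  refine ⟨Function.update a t bt, hpre, hload' ▸ Nat.le_of_lt_succ p.isLt,
    pathVertex_eq_some w _ hc hload', ?_⟩
  simp [pathLabel, hk, hl, t]

lemma outflow_pathVertex_ne_zero (hf : f ∈ arcFlows m W w)
    (hpos : outflow (some (0, 0)) f ≠ 0) {a : Fin m → Bool} {k : ℕ} (hk : k ≤ m)
    (hpath : ∀ i < k, f (pathVertex W w a i) (pathVertex W w a (i + 1)) (pathLabel a i) ≠ 0) :
    outflow (pathVertex W w a k) f ≠ 0 := by
  cases k with
  | zero => rwa [pathVertex_zero]
  | succ k =>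
    refine outflow_ne_zero_of_apply_ne_zero hf (hpath k k.lt_succ_self)
      (pathVertex_ne_source w a k.succ_ne_zero) ?_
    rw [pathVertex_of_le w a hk]
    exact Option.some_ne_none _

lemma exists_prefix_flow_ne_zero (hf : f ∈ arcFlows m W w)
    (hpos : outflow (some (0, 0)) f ≠ 0) {k : ℕ} (hk : k ≤ m + 1) :
    ∃ a : Fin m → Bool, load w a k ≤ W ∧
      ∀ i < k, f (pathVertex W w a i) (pathVertex W w a (i + 1)) (pathLabel a i) ≠ 0 := by
  induction k with
  | zero => exact ⟨fun _ => false, by simp [load_zero], fun i hi => absurd hi i.not_lt_zero⟩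
  | succ k ih =>
    obtain ⟨a, hload, hpath⟩ := ih (by omega)
    obtain ⟨v, l, hvl⟩ :=
      exists_ne_zero_of_outflow_ne_zero (outflow_pathVertex_ne_zero hf hpos (by omega) hpath)
    have harc : dArc m W w (pathVertex W w a k) v l := by_contra fun h => hvl (hf.1 _ _ _ h)
    -- The positive arc out of the current vertex either reaches the target or decides item `k`.
    match v, harc with
    | none, harc =>
      rw [pathVertex_of_le w a (by omega)] at harc
      obtain ⟨hkm, rfl⟩ := harc
      replace hkm : k = m := hkm
      refine ⟨a, by rwa [load_of_le w a (by omega), ← load_of_le w a hkm.ge], fun i hi => ?_⟩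
      rcases Nat.lt_succ_iff_lt_or_eq.1 hi with hi | rfl
      · exact hpath i hi
      · rwa [pathVertex_of_lt w a (Nat.lt_succ_of_le hkm.ge), pathLabel_of_le a hkm.ge]
    | some (c, p), harc =>
      have hkm : k < m := by
        rw [pathVertex_of_le w a (by omega)] at harc
        have : (c : ℕ) = k + 1 := harc.1
        omega
      obtain ⟨a', hpre, hload', hv', hl'⟩ := exists_update_of_dArc hkm hload harc
      refine ⟨a', hload', fun i hi => ?_⟩
      rcases Nat.lt_succ_iff_lt_or_eq.1 hi with hi | rfl
      · rw [pathVertex_congr w fun j hj => hpre j (by omega),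
          pathVertex_congr w fun j hj => hpre j (by omega),
          pathLabel_congr fun j hj => hpre j (by omega)]
        exact hpath i hi
      · rwa [pathVertex_congr w hpre, hv', hl']

lemma exists_pathFlow_le (hf : f ∈ arcFlows m W w) (hpos : outflow (some (0, 0)) f ≠ 0) :
    ∃ a : Fin m → Bool, ∑ i, (if a i then w i else 0) ≤ W ∧ pathFlow W w a ≤ f := by
  obtain ⟨a, hload, hpath⟩ := exists_prefix_flow_ne_zero hf hpos le_rfl
  exact ⟨a, load_of_le w a m.le_succ ▸ hload, walkFlow_le _ _ _ (pathVertex_injOn w a) hpath⟩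

lemma exists_sum_pathFlow_eq (hf : f ∈ arcFlows m W w) :
    ∃ L : List (Fin m → Bool), L.length = outflow (some (0, 0)) f ∧
      (∀ a ∈ L, ∑ i, (if a i then w i else 0) ≤ W) ∧ (L.map (pathFlow W w)).sum = f := by
  induction hz : outflow (some (0, 0)) f generalizing f with
  | zero => exact ⟨[], rfl, by simp, (eq_zero_of_outflow_source_eq_zero hf hz).symm⟩
  | succ z ih =>
    obtain ⟨a, hfit, hle⟩ := exists_pathFlow_le hf (hz ▸ z.succ_ne_zero)
    have hz' : outflow (some (0, 0)) (f - pathFlow W w a) = z := by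
      have := map_add (outflow (some (0, 0))) (f - pathFlow W w a) (pathFlow W w a)
      rw [tsub_add_cancel_of_le hle, hz, outflow_source_pathFlow] at this
      omega
    obtain ⟨L, hlen, hL, hsum⟩ := ih (tsub_mem_arcFlows hf (pathFlow_mem_arcFlows w hfit) hle) hz'
    refine ⟨a :: L, by simp [hlen], List.forall_mem_cons.2 ⟨hfit, hL⟩, ?_⟩
    rw [List.map_cons, List.sum_cons, hsum, add_tsub_cancel_of_le hle]

end Decomposition

theorem flowVals_eq_patVals {m W : ℕ} (w b : Fin m → ℕ) : flowVals m W w b = patVals m W w b := by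
  ext z
  rw [mem_flowVals_iff]
  constructor
  · rintro ⟨f, hf, hdem, rfl⟩
    obtain ⟨L, hlen, hL, rfl⟩ := exists_sum_pathFlow_eq hf
    exact ⟨L, hlen, hL, fun j => (hdem j).trans_eq (labelCount_sum_pathFlow w L j)⟩
  · rintro ⟨L, rfl, hL, hdem⟩
    exact ⟨_, sum_pathFlow_mem_arcFlows w hL,
      fun j => (hdem j).trans_eq (labelCount_sum_pathFlow w L j).symm,
      (outflow_source_sum_pathFlow w L).symm⟩

theorem arcflow_eq_gilmore_gomory_general (m W : ℕ) (w b : Fin m → ℕ) :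
    sInf (flowVals m W w b) = sInf (patVals m W w b) := by
  rw [flowVals_eq_patVals]

/-- The arc-flow formulation over the DP graph is equivalent to the Gilmore-Gomory
formulation over binary patterns: the optimal integer values coincide. -/
theorem arcflow_eq_gilmore_gomory (m W : ℕ) (w b : Fin m → ℕ)
    (hw : ∀ i, 1 ≤ w i ∧ w i ≤ W) :
    sInf (flowVals m W w b) = sInf (patVals m W w b) :=
  arcflow_eq_gilmore_gomory_general m W w b
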